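/- arXiv:1611.01809 — 2 statements merged into one kernel-verified Lean document; each statement's English description precedes it below -/
import Mathlib

section
/- If T is a torsion graded module and N is any graded module over a commutative positively graded connected K-algebra A, then Tor_1^A(T, N) is a torsion graded module. -/
/-!
Computing `Tor` with a projective resolution `P` of `N`, every element of `Tor_n^A(T, N)` is the
class of a cycle in `T ⊗[A] Pₙ`. Elements of `T ⊗[A] M` are torsion because pure tensors are
(torsion of `T`), and torsion elements are preserved by linear maps and reflected by injective
ones, hence pass to the subquotient.
-/

open CategoryTheory

/-- `m` is a torsion element: `A_k • m = 0` for all sufficiently large `k`. -/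
def IsTorsionElt {K A : Type} [Field K] [CommRing A] [Algebra K A]
    (𝒜 : ℤ → Submodule K A) {M : Type} [AddCommGroup M] [Module A M] (m : M) : Prop :=
  ∃ N : ℤ, ∀ k : ℤ, N < k → ∀ a ∈ 𝒜 k, a • m = 0

open scoped TensorProduct

section

variable {K A : Type} [Field K] [CommRing A] [Algebra K A] {𝒜 : ℤ → Submodule K A}
  {M M' : Type} [AddCommGroup M] [Module A M] [AddCommGroup M'] [Module A M']

namespace IsTorsionElt

lemma zero : IsTorsionElt 𝒜 (0 : M) :=
  ⟨0, fun _ _ a _ => smul_zero a⟩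

lemma add {m m' : M} (hm : IsTorsionElt 𝒜 m) (hm' : IsTorsionElt 𝒜 m') :
    IsTorsionElt 𝒜 (m + m') := by
  obtain ⟨n, hn⟩ := hm
  obtain ⟨n', hn'⟩ := hm'
  refine ⟨max n n', fun k hk a ha => ?_⟩
  rw [smul_add, hn k (max_lt_iff.mp hk).1 a ha, hn' k (max_lt_iff.mp hk).2 a ha, add_zero]

lemma map (f : M →ₗ[A] M') {m : M} (hm : IsTorsionElt 𝒜 m) : IsTorsionElt 𝒜 (f m) := by
  obtain ⟨n, hn⟩ := hm
  exact ⟨n, fun k hk a ha => by rw [← map_smul, hn k hk a ha, map_zero]⟩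

lemma of_injective {f : M →ₗ[A] M'} (hf : Function.Injective f) {m : M}
    (hm : IsTorsionElt 𝒜 (f m)) : IsTorsionElt 𝒜 m := by
  obtain ⟨n, hn⟩ := hm
  exact ⟨n, fun k hk a ha => hf <| by rw [map_smul, hn k hk a ha, map_zero]⟩

end IsTorsionElt

lemma isTorsionElt_tensorProduct (hM : ∀ m : M, IsTorsionElt 𝒜 m) (x : M ⊗[A] M') :
    IsTorsionElt 𝒜 x := by
  induction x using TensorProduct.induction_on with
  | zero => exact .zero
  | tmul m m' =>
    obtain ⟨n, hn⟩ := hM m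
    exact ⟨n, fun k hk a ha => by
      rw [TensorProduct.smul_tmul', hn k hk a ha, TensorProduct.zero_tmul]⟩
  | add x y hx hy => exact hx.add hy

lemma isTorsionElt_of_iso {X Y : ModuleCat.{0} A} (e : X ≅ Y) (hY : ∀ y : Y, IsTorsionElt 𝒜 y)
    (x : X) : IsTorsionElt 𝒜 x := by
  simpa using (hY (e.hom x)).map e.inv.hom

lemma HomologicalComplex.isTorsionElt_homology {ι : Type*} {c : ComplexShape ι}
    (C : HomologicalComplex (ModuleCat.{0} A) c) (i : ι) (hC : ∀ x : C.X i, IsTorsionElt 𝒜 x)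
    (x : C.homology i) : IsTorsionElt 𝒜 x := by
  obtain ⟨z, rfl⟩ := (ModuleCat.epi_iff_surjective (C.homologyπ i)).mp inferInstance x
  have hi : Function.Injective (C.iCycles i) := (ModuleCat.mono_iff_injective _).mp inferInstance
  exact (IsTorsionElt.of_injective hi (hC _)).map (C.homologyπ i).hom

lemma isTorsionElt_tor {T N : Type} [AddCommGroup T] [Module A T] [AddCommGroup N] [Module A N]
    (hT : ∀ t : T, IsTorsionElt 𝒜 t) (n : ℕ)
    (x : ((Tor (ModuleCat.{0} A) n).obj (ModuleCat.of A T)).obj (ModuleCat.of A N)) :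
    IsTorsionElt 𝒜 x := by
  let P : ProjectiveResolution (ModuleCat.of A N) := Classical.choice HasProjectiveResolution.out
  let F := (MonoidalCategory.tensoringLeft (ModuleCat.{0} A)).obj (ModuleCat.of A T)
  refine isTorsionElt_of_iso (P.isoLeftDerivedObj F n) ?_ x
  exact HomologicalComplex.isTorsionElt_homology _ n (isTorsionElt_tensorProduct hT)

end

theorem tor_one_torsion_of_torsion_general
    {K A : Type} [Field K] [CommRing A] [Algebra K A]
    (𝒜 : ℤ → Submodule K A)
    (T N : Type) [AddCommGroup T] [Module A T] [AddCommGroup N] [Module A N]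
    -- `T` is a torsion module
    (hT : ∀ t : T, IsTorsionElt 𝒜 t) :
    ∀ x : ((Tor (ModuleCat.{0} A) 1).obj (ModuleCat.of A T)).obj (ModuleCat.of A N),
      IsTorsionElt 𝒜 x :=
  isTorsionElt_tor hT 1

theorem tor_one_torsion_of_torsion
    {K A : Type} [Field K] [CommRing A] [Algebra K A]
    (𝒜 : ℤ → Submodule K A) [GradedAlgebra 𝒜]
    -- `A` is positively graded and connected
    (hpos : ∀ i : ℤ, i < 0 → 𝒜 i = ⊥)
    (hconn : ∀ a ∈ 𝒜 0, ∃ c : K, a = algebraMap K A c)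
    (T N : Type) [AddCommGroup T] [Module A T] [AddCommGroup N] [Module A N]
    -- `T` is a torsion module
    (hT : ∀ t : T, IsTorsionElt 𝒜 t) :
    ∀ x : ((Tor (ModuleCat.{0} A) 1).obj (ModuleCat.of A T)).obj (ModuleCat.of A N),
      IsTorsionElt 𝒜 x :=
  tor_one_torsion_of_torsion_general 𝒜 T N hT
end

section
/- Let A = K[x_0, ..., x_n] be a graded polynomial ring with deg(x_i) = d_i > 0 and l = lcm(d_0, ..., d_n). For any k ≥ 0, writing k = a·l + r by division with 0 ≤ r < l, the graded A-module map O(r)^{⊕(n+1)} → O(k) sending the j-th basis vector to multiplication by x_j^{al/d_j} has torsion cokernel; that is, every element of A(k) of sufficiently high degree lies in the image. -/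
/-!
STATEMENT 7.  Let `A = K[x_0, …, x_n]` with `deg x_i = d_i > 0` and `l = lcm(d_0, …, d_n)`.
For `k ≥ 0` write `k = a·l + r` with `0 ≤ r < l`.  Then the graded map
`O(r)^{⊕(n+1)} → O(k)`, sending the `j`-th basis vector to multiplication by
`x_j^{a·l/d_j}`, has torsion cokernel: every (weighted-)homogeneous element of `A(k)` of
sufficiently high degree lies in the image, i.e. in the ideal generated by the
`x_j^{a·l/d_j}`.
-/

open MvPolynomial

theorem twist_epimorphism_up_to_torsion
    (K : Type) [Field K] (n : ℕ) (d : Fin (n + 1) → ℕ) (hd : ∀ j, 0 < d j)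
    (l : ℕ) (hl : l = Finset.univ.lcm d)
    (k a r : ℕ) (hk : k = a * l + r) (hr : r < l) :
    ∃ N : ℕ, ∀ m : ℕ, N ≤ m →
      ∀ f ∈ weightedHomogeneousSubmodule K d m,
        f ∈ Ideal.span (Set.range fun j : Fin (n + 1) =>
          (X j : MvPolynomial (Fin (n + 1)) K) ^ (a * l / d j)) := by
  refine ⟨(n + 1) * (a * l), fun m hm f hf => ?_⟩
  rw [mem_weightedHomogeneousSubmodule] at hf
  rw [f.as_sum]
  refine Ideal.sum_mem _ fun e he => ?_
  have hwe : Finsupp.weight d e = m := hf (mem_support_iff.mp he)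
  -- find j with a*l/d j ≤ e j
  have hj : ∃ j, a * l / d j ≤ e j := by
    by_contra h
    push_neg at h
    have hdvd : ∀ j, d j ∣ a * l := fun j =>
      Dvd.dvd.mul_left (hl ▸ Finset.dvd_lcm (Finset.mem_univ j)) a
    have hlt : ∀ j, e j * d j < a * l := by
      intro j
      have h1 : e j + 1 ≤ a * l / d j := h j
      have h2 : (e j + 1) * d j ≤ a * l / d j * d j :=
        Nat.mul_le_mul_right _ h1
      rw [Nat.div_mul_cancel (hdvd j)] at h2
      calc e j * d j < (e j + 1) * d j := by
            have := hd j; nlinarith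
        _ ≤ a * l := h2
    have hsum : (Finsupp.weight d) e = ∑ j : Fin (n + 1), e j * d j := by
      rw [Finsupp.weight_apply, Finsupp.sum_fintype]
      · simp [mul_comm]
      · intro i; simp
    have : m < (n + 1) * (a * l) := by
      rw [← hwe, hsum]
      calc ∑ j : Fin (n + 1), e j * d j < ∑ _j : Fin (n + 1), a * l :=
            Finset.sum_lt_sum_of_nonempty Finset.univ_nonempty fun j _ => hlt j
        _ = (n + 1) * (a * l) := by simp [Finset.sum_const, mul_comm]
    omega
  obtain ⟨j, hj⟩ := hj
  have hdvd : (X j : MvPolynomial (Fin (n + 1)) K) ^ (a * l / d j) ∣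
      monomial e (coeff e f) := by
    rw [X_pow_eq_monomial, monomial_dvd_monomial]
    exact ⟨Or.inr fun i => by
      classical
      rcases eq_or_ne i j with rfl | hij
      · simpa using hj
      · simp [Finsupp.single_apply, hij.symm], one_dvd _⟩
  exact Ideal.mem_of_dvd _ hdvd (Ideal.subset_span ⟨j, rfl⟩)
end
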